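/- arXiv:2405.08360 — 2 statements merged into one kernel-verified Lean document; each statement's English description precedes it below -/
import Mathlib

section
/- Cell entropy inequality for monotone fluxes: let f : ℝ → ℝ be C¹ with antiderivative F, and let f̂(u⁻, u⁺) be a numerical flux that is consistent (f̂(u,u) = f(u)), nondecreasing in its first argument, and nonincreasing in its second argument. Then for any real numbers u⁻, u⁺: F(u⁺) - F(u⁻) - f̂(u⁻,u⁺)·(u⁺ - u⁻) ≥ 0. -/
/-! By the mean value theorem `F u⁺ - F u⁻ = f c * (u⁺ - u⁻)` for some `c` between `u⁻` and `u⁺`.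
Monotonicity moves `f̂ u⁻ u⁺` towards `f̂ c c = f c` one argument at a time, which shows
`f̂ u⁻ u⁺ ≤ f c` when `u⁻ < u⁺` and `f c ≤ f̂ u⁻ u⁺` when `u⁺ < u⁻`; either way the residual
`(f c - f̂ u⁻ u⁺) * (u⁺ - u⁻)` is nonnegative. -/

open Set

section MonotoneFlux

variable {f : ℝ → ℝ} {fhat : ℝ → ℝ → ℝ}

theorem flux_le_of_mem_Icc (hconsistent : ∀ u, fhat u u = f u)
    (hmono₁ : ∀ w, Monotone fun v => fhat v w) (hmono₂ : ∀ v, Antitone fun w => fhat v w)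
    {a b c : ℝ} (hc : c ∈ Icc a b) : fhat a b ≤ f c :=
  hconsistent c ▸ (hmono₂ a hc.2).trans (hmono₁ c hc.1)

theorem le_flux_of_mem_Icc (hconsistent : ∀ u, fhat u u = f u)
    (hmono₁ : ∀ w, Monotone fun v => fhat v w) (hmono₂ : ∀ v, Antitone fun w => fhat v w)
    {a b c : ℝ} (hc : c ∈ Icc b a) : f c ≤ fhat a b :=
  hconsistent c ▸ (hmono₂ c hc.1).trans (hmono₁ b hc.2)

end MonotoneFlux

theorem exists_mem_Ioo_sub_eq_mul_sub {f F : ℝ → ℝ} (hF : ∀ t, HasDerivAt F (f t) t)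
    {a b : ℝ} (hab : a < b) : ∃ c ∈ Ioo a b, F b - F a = f c * (b - a) := by
  have hFc : Continuous F := continuous_iff_continuousAt.2 fun t => (hF t).continuousAt
  obtain ⟨c, hc, hslope⟩ := exists_hasDerivAt_eq_slope F f hab hFc.continuousOn fun t _ => hF t
  exact ⟨c, hc, by rw [hslope, div_mul_cancel₀ _ (sub_ne_zero.2 hab.ne')]⟩

theorem cell_entropy_inequality_general
    (f F : ℝ → ℝ) (hF : ∀ t, HasDerivAt F (f t) t)
    (fhat : ℝ → ℝ → ℝ)
    (hconsistent : ∀ u, fhat u u = f u)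
    (hmono₁ : ∀ w, Monotone fun v => fhat v w)
    (hmono₂ : ∀ v, Antitone fun w => fhat v w) :
    ∀ um up : ℝ, 0 ≤ F up - F um - fhat um up * (up - um) := by
  intro um up
  rcases lt_trichotomy um up with h | rfl | h
  · obtain ⟨c, hc, hmvt⟩ := exists_mem_Ioo_sub_eq_mul_sub hF h
    have hflux := flux_le_of_mem_Icc hconsistent hmono₁ hmono₂ (Ioo_subset_Icc_self hc)
    calc 0 ≤ (f c - fhat um up) * (up - um) := mul_nonneg (by linarith) (by linarith)
      _ = F up - F um - fhat um up * (up - um) := by rw [hmvt]; ring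
  · simp
  · obtain ⟨c, hc, hmvt⟩ := exists_mem_Ioo_sub_eq_mul_sub hF h
    have hflux := le_flux_of_mem_Icc hconsistent hmono₁ hmono₂ (Ioo_subset_Icc_self hc)
    calc 0 ≤ (f c - fhat um up) * (up - um) :=
          mul_nonneg_of_nonpos_of_nonpos (by linarith) (by linarith)
      _ = F up - F um - fhat um up * (up - um) := by linear_combination hmvt

/-- Cell entropy inequality for consistent monotone numerical fluxes:
if `F` is an antiderivative of the `C¹` function `f`, and `f̂` is consistent
(`f̂(u,u) = f(u)`), nondecreasing in its first argument and nonincreasing in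
its second argument, then `F(u⁺) - F(u⁻) - f̂(u⁻,u⁺)(u⁺ - u⁻) ≥ 0`. -/
theorem cell_entropy_inequality
    (f F : ℝ → ℝ) (hf : ContDiff ℝ 1 f) (hF : ∀ t, HasDerivAt F (f t) t)
    (fhat : ℝ → ℝ → ℝ)
    (hconsistent : ∀ u, fhat u u = f u)
    (hmono₁ : ∀ w, Monotone fun v => fhat v w)
    (hmono₂ : ∀ v, Antitone fun w => fhat v w) :
    ∀ um up : ℝ, 0 ≤ F up - F um - fhat um up * (up - um) :=
  cell_entropy_inequality_general f F hF fhat hconsistent hmono₁ hmono₂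
end

section
/- If L is a skew-adjoint operator on a real inner product space (Lᵀ = -L) and P₄(x) = 1 + x + x²/2 + x³/6 + x⁴/24, then for every v: ‖P₄(τL)v‖² = ‖v‖² - (1/72)‖(τL)³v‖² + (1/576)‖(τL)⁴v‖². -/
/-!
For the skew-adjoint `A = τL` the adjoint of `P₄(A)` is `P₄(-A)`, and over the reals
`P₄(-x) P₄(x) = 1 + x⁶/72 + x⁸/576`, so `‖P₄(A) v‖² = ⟪P₄(-A) P₄(A) v, v⟫` reduces to
`⟪A⁶ v, v⟫ = -‖A³ v‖²` and `⟪A⁸ v, v⟫ = ‖A⁴ v‖²`, both from moving `A^k` across the inner product.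
-/

open scoped RealInnerProductSpace

section Algebra

variable {R : Type*} [Ring R] [Algebra ℝ R]

/-- The polynomial `P₄`, the stability function of the classical Runge–Kutta method. -/
noncomputable def expTaylor4 (a : R) : R :=
  1 + a + (2 : ℝ)⁻¹ • a ^ 2 + (6 : ℝ)⁻¹ • a ^ 3 + (24 : ℝ)⁻¹ • a ^ 4

open Polynomial in
theorem expTaylor4_neg_mul_expTaylor4 (a : R) :
    expTaylor4 (-a) * expTaylor4 a = 1 + (72 : ℝ)⁻¹ • a ^ 6 + (576 : ℝ)⁻¹ • a ^ 8 := by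
  have h := congrArg (aeval a) (show (expTaylor4 (-X) * expTaylor4 X : ℝ[X])
      = 1 + (72 : ℝ)⁻¹ • X ^ 6 + (576 : ℝ)⁻¹ • X ^ 8 by
    refine Polynomial.funext fun x => ?_
    simp only [expTaylor4, eval_add, eval_mul, eval_smul, eval_pow, eval_neg, eval_one, eval_X,
      smul_eq_mul]
    ring)
  simpa [expTaylor4] using h

theorem star_expTaylor4 [StarRing R] [StarModule ℝ R] (a : R) :
    star (expTaylor4 a) = expTaylor4 (star a) := by
  simp only [expTaylor4, star_add, star_one, star_smul, star_pow, star_trivial]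

end Algebra

section SkewAdjoint

variable {V : Type*} [NormedAddCommGroup V] [InnerProductSpace ℝ V] [CompleteSpace V]

theorem norm_sq_apply_eq_inner_star_mul_apply (T : V →L[ℝ] V) (v : V) :
    ‖T v‖ ^ 2 = ⟪(star T * T) v, v⟫ := by
  rw [ContinuousLinearMap.star_eq_adjoint, mul_apply_eq_comp,
    ContinuousLinearMap.adjoint_inner_left, real_inner_self_eq_norm_sq]

theorem inner_pow_two_mul_apply_self_of_star_eq_neg {A : V →L[ℝ] V} (hA : star A = -A) (k : ℕ)
    (v : V) : ⟪(A ^ (2 * k)) v, v⟫ = (-1) ^ k * ‖(A ^ k) v‖ ^ 2 := by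
  have hstar : star (A ^ k) = (-1 : ℝ) ^ k • A ^ k := by
    rw [star_pow, hA, ← neg_one_smul ℝ A, smul_pow]
  rw [two_mul, pow_add, mul_apply_eq_comp, ← ContinuousLinearMap.adjoint_inner_right,
    ← ContinuousLinearMap.star_eq_adjoint, hstar, smul_apply, real_inner_smul_right,
    real_inner_self_eq_norm_sq]

end SkewAdjoint

theorem rk4_energy_equality_skew_adjoint_general
    {V : Type*} [NormedAddCommGroup V] [InnerProductSpace ℝ V] [CompleteSpace V]
    (L : V →L[ℝ] V) (hskew : ContinuousLinearMap.adjoint L = -L) (τ : ℝ) :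
    ∀ v : V,
      ‖((1 + τ • L + (2 : ℝ)⁻¹ • (τ • L) ^ 2 + (6 : ℝ)⁻¹ • (τ • L) ^ 3
          + (24 : ℝ)⁻¹ • (τ • L) ^ 4 : V →L[ℝ] V)) v‖ ^ 2
        = ‖v‖ ^ 2 - (1 / 72 : ℝ) * ‖((τ • L) ^ 3) v‖ ^ 2
          + (1 / 576 : ℝ) * ‖((τ • L) ^ 4) v‖ ^ 2 := by
  intro v
  set A : V →L[ℝ] V := τ • L
  have hA : star A = -A := by
    rw [star_smul, star_trivial, ContinuousLinearMap.star_eq_adjoint, hskew, smul_neg]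
  have h6 : ⟪(A ^ 6) v, v⟫ = -‖(A ^ 3) v‖ ^ 2 := by
    rw [show 6 = 2 * 3 from rfl, inner_pow_two_mul_apply_self_of_star_eq_neg hA]
    ring
  have h8 : ⟪(A ^ 8) v, v⟫ = ‖(A ^ 4) v‖ ^ 2 := by
    rw [show 8 = 2 * 4 from rfl, inner_pow_two_mul_apply_self_of_star_eq_neg hA]
    ring
  change ‖expTaylor4 A v‖ ^ 2 = _
  rw [norm_sq_apply_eq_inner_star_mul_apply, star_expTaylor4, hA, expTaylor4_neg_mul_expTaylor4]
  simp only [add_apply, smul_apply, one_apply_eq_self, inner_add_left, real_inner_smul_left,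
    real_inner_self_eq_norm_sq, h6, h8]
  ring

/-- If `L` is a skew-adjoint bounded operator on a real Hilbert space
(`Lᵀ = -L`) and `P₄(x) = 1 + x + x²/2 + x³/6 + x⁴/24`, then for every `v`:
`‖P₄(τL)v‖² = ‖v‖² - (1/72)‖(τL)³v‖² + (1/576)‖(τL)⁴v‖²`. -/
theorem rk4_energy_equality_skew_adjoint
    {V : Type*} [NormedAddCommGroup V] [InnerProductSpace ℝ V] [CompleteSpace V]
    (L : V →L[ℝ] V) (hskew : ContinuousLinearMap.adjoint L = -L) (τ : ℝ) (hτ : 0 < τ) :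
    ∀ v : V,
      ‖((1 + τ • L + (2 : ℝ)⁻¹ • (τ • L) ^ 2 + (6 : ℝ)⁻¹ • (τ • L) ^ 3
          + (24 : ℝ)⁻¹ • (τ • L) ^ 4 : V →L[ℝ] V)) v‖ ^ 2
        = ‖v‖ ^ 2 - (1 / 72 : ℝ) * ‖((τ • L) ^ 3) v‖ ^ 2
          + (1 / 576 : ℝ) * ‖((τ • L) ^ 4) v‖ ^ 2 :=
  rk4_energy_equality_skew_adjoint_general L hskew τ
end
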